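/- For mean-zero L² random variables Y, Z, U, W (with W possibly vector-valued), the omitted variable bias formula holds: the coefficient on Z in the regression of Y on (Z, W) minus the coefficient on Z in the regression of Y on (Z, W, U) equals [Cov(U^{⊥W}, Z^{⊥W}) / Var(Z^{⊥W})] · [Cov(Y^{⊥Z,W}, U^{⊥Z,W}) / Var(U^{⊥Z,W})]. -/

import Mathlib

/-
Frisch–Waugh–Lovell: if `Y = b • X + w + e` with `w ∈ span S` and
`e ⟂ span (insert X S)`, then pairing with `X^{⊥S}` kills `w` and `e` and
turns `X` into `X^{⊥S}`, so `⟪Y, X^{⊥S}⟫ = b ‖X^{⊥S}‖²`. Applied to the short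
regression, to the long regression with `dl • U` moved to the left, and to the
long regression with `U` as the regressor of interest, this gives
`bs ‖Z^{⊥W}‖² = bl ‖Z^{⊥W}‖² + dl ⟪U^{⊥W}, Z^{⊥W}⟫` and
`⟪Y^{⊥Z,W}, U^{⊥Z,W}⟫ = dl ‖U^{⊥Z,W}‖²`.
-/

open Submodule RealInnerProductSpace

/-- Residual of `A` after orthogonal projection onto the span of the finite set `S`
(population linear projection residual `A^{⊥S}`). -/
noncomputable def resid {H : Type*} [NormedAddCommGroup H] [InnerProductSpace ℝ H]
    [CompleteSpace H] (A : H) (S : Set H) (hS : S.Finite) : H :=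
  haveI := hS.to_subtype
  haveI : FiniteDimensional ℝ (span ℝ S) := FiniteDimensional.span_of_finite ℝ hS
  A - (orthogonalProjection (span ℝ S) A : H)

section Residual

variable {H : Type*} [NormedAddCommGroup H] [InnerProductSpace ℝ H]

theorem mem_orthogonal_span_of_forall_inner {S : Set H} {e : H} (h : ∀ s ∈ S, ⟪e, s⟫ = 0) :
    e ∈ (span ℝ S)ᗮ :=
  (isOrtho_span.2 fun _ he s hs => (Set.mem_singleton_iff.1 he) ▸ h s hs).le
    (mem_span_singleton_self e)

variable [CompleteSpace H] {S T : Set H} (hS : S.Finite)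

theorem resid_mem_orthogonal (A : H) : resid A S hS ∈ (span ℝ S)ᗮ := by
  have := hS.to_subtype
  have : FiniteDimensional ℝ (span ℝ S) := FiniteDimensional.span_of_finite ℝ hS
  exact sub_starProjection_mem_orthogonal A

theorem sub_resid_mem_span (A : H) : A - resid A S hS ∈ span ℝ S := by
  simp only [resid, sub_sub_cancel]
  exact coe_mem _

theorem inner_resid_eq_zero_of_mem_span (A : H) {x : H} (hx : x ∈ span ℝ S) :
    ⟪x, resid A S hS⟫ = 0 :=
  inner_right_of_mem_orthogonal hx (resid_mem_orthogonal hS A)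

theorem inner_resid_eq_of_sub_mem_span (A : H) {x y : H} (h : x - y ∈ span ℝ S) :
    ⟪x, resid A S hS⟫ = ⟪y, resid A S hS⟫ := by
  rw [← sub_eq_zero, ← inner_sub_left]
  exact inner_resid_eq_zero_of_mem_span hS A h

theorem resid_inner_resid (A B : H) : ⟪resid A S hS, resid B S hS⟫ = ⟪A, resid B S hS⟫ :=
  (inner_resid_eq_of_sub_mem_span hS B (sub_resid_mem_span hS A)).symm

theorem resid_mem_span_of_subset {A : H} (hST : S ⊆ T) (hA : A ∈ span ℝ T) :
    resid A S hS ∈ span ℝ T := by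
  rw [← sub_sub_cancel A (resid A S hS)]
  exact sub_mem hA (span_mono hST (sub_resid_mem_span hS A))

theorem inner_resid_of_sub_mem_orthogonal {X Y w : H} (b : ℝ) (hw : w ∈ span ℝ S)
    (he : Y - (b • X + w) ∈ (span ℝ (insert X S))ᗮ) :
    ⟪Y, resid X S hS⟫ = b * ⟪resid X S hS, resid X S hS⟫ := by
  have hXS : resid X S hS ∈ span ℝ (insert X S) :=
    resid_mem_span_of_subset hS (Set.subset_insert X S) (subset_span (Set.mem_insert X S))
  have hY : ⟪Y, resid X S hS⟫ = ⟪b • X + w, resid X S hS⟫ := by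
    rw [← sub_eq_zero, ← inner_sub_left]
    exact inner_left_of_mem_orthogonal hXS he
  rw [hY, inner_add_left, inner_resid_eq_zero_of_mem_span hS X hw, real_inner_smul_left,
    resid_inner_resid, add_zero]

end Residual

theorem stmt_7_general {H : Type*} [NormedAddCommGroup H] [InnerProductSpace ℝ H] [CompleteSpace H]
    {k : ℕ} (Y Z U : H) (W : Fin k → H)
    (hvZ : 0 < ⟪resid Z (Set.range W) (Set.finite_range W),
                resid Z (Set.range W) (Set.finite_range W)⟫)
    (hvU : 0 < ⟪resid U (insert Z (Set.range W)) ((Set.finite_range W).insert Z),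
                resid U (insert Z (Set.range W)) ((Set.finite_range W).insert Z)⟫) :
    ∀ (bs bl : ℝ) (cs cl : Fin k → ℝ) (dl : ℝ),
      (⟪Y - (bs • Z + ∑ i, cs i • W i), Z⟫ = 0) →
      (∀ j, ⟪Y - (bs • Z + ∑ i, cs i • W i), W j⟫ = 0) →
      (⟪Y - (bl • Z + dl • U + ∑ i, cl i • W i), Z⟫ = 0) →
      (⟪Y - (bl • Z + dl • U + ∑ i, cl i • W i), U⟫ = 0) →
      (∀ j, ⟪Y - (bl • Z + dl • U + ∑ i, cl i • W i), W j⟫ = 0) →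
      bs - bl =
        (⟪resid U (Set.range W) (Set.finite_range W),
          resid Z (Set.range W) (Set.finite_range W)⟫ /
         ⟪resid Z (Set.range W) (Set.finite_range W),
          resid Z (Set.range W) (Set.finite_range W)⟫) *
        (⟪resid Y (insert Z (Set.range W)) ((Set.finite_range W).insert Z),
          resid U (insert Z (Set.range W)) ((Set.finite_range W).insert Z)⟫ /
         ⟪resid U (insert Z (Set.range W)) ((Set.finite_range W).insert Z),
          resid U (insert Z (Set.range W)) ((Set.finite_range W).insert Z)⟫) := by
  intro bs bl cs cl dl hsZ hsW hlZ hlU hlW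
  have hW := Set.finite_range W
  have hcs : ∑ i, cs i • W i ∈ span ℝ (Set.range W) :=
    (mem_span_range_iff_exists_fun ℝ).2 ⟨cs, rfl⟩
  have hcl : ∑ i, cl i • W i ∈ span ℝ (Set.range W) :=
    (mem_span_range_iff_exists_fun ℝ).2 ⟨cl, rfl⟩
  have hlong_orth : Y - (bl • Z + dl • U + ∑ i, cl i • W i) ∈
      (span ℝ (insert U (insert Z (Set.range W))))ᗮ :=
    mem_orthogonal_span_of_forall_inner <| by
      rintro _ (rfl | rfl | ⟨j, rfl⟩) <;> simp only [hlU, hlZ, hlW]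
  have hshort := inner_resid_of_sub_mem_orthogonal hW bs (X := Z) (Y := Y) hcs <|
    mem_orthogonal_span_of_forall_inner <| by rintro _ (rfl | ⟨j, rfl⟩) <;> simp only [hsZ, hsW]
  have hlong := inner_resid_of_sub_mem_orthogonal hW bl (X := Z) (Y := Y - dl • U) hcl <| by
    rw [show Y - dl • U - (bl • Z + ∑ i, cl i • W i) =
      Y - (bl • Z + dl • U + ∑ i, cl i • W i) by abel]
    exact orthogonal_le (span_mono (Set.subset_insert _ _)) hlong_orth
  have hdl := inner_resid_of_sub_mem_orthogonal (hW.insert Z) dl (X := U) (Y := Y)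
    (add_mem (smul_mem _ bl (subset_span (Set.mem_insert Z _)))
      (span_mono (Set.subset_insert Z _) hcl)) <| by
    rwa [show dl • U + (bl • Z + ∑ i, cl i • W i) =
      bl • Z + dl • U + ∑ i, cl i • W i by abel]
  rw [inner_sub_left, real_inner_smul_left] at hlong
  rw [resid_inner_resid hW U Z, resid_inner_resid (hW.insert Z) Y U, hdl]
  field_simp
  linarith

/-- Omitted variable bias formula (Lemma A.2 underpinning): the coefficient on `Z` in the
regression of `Y` on `(Z, W)` minus the coefficient on `Z` in the regression of `Y`
on `(Z, W, U)` equals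
`[Cov(U^{⊥W}, Z^{⊥W}) / Var(Z^{⊥W})] · [Cov(Y^{⊥Z,W}, U^{⊥Z,W}) / Var(U^{⊥Z,W})]`.
Here `W` may be vector-valued (a finite family), random variables are vectors in a real
Hilbert space (inner product = covariance), and regression coefficients are characterized
by the normal equations, with regressors linearly independent. -/
theorem stmt_7 {H : Type*} [NormedAddCommGroup H] [InnerProductSpace ℝ H] [CompleteSpace H]
    {k : ℕ} (Y Z U : H) (W : Fin k → H)
    (hli : LinearIndependent ℝ (Fin.cons Z (Fin.cons U W) : Fin (k + 2) → H))
    (hvZ : 0 < ⟪resid Z (Set.range W) (Set.finite_range W),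
                resid Z (Set.range W) (Set.finite_range W)⟫)
    (hvU : 0 < ⟪resid U (insert Z (Set.range W)) ((Set.finite_range W).insert Z),
                resid U (insert Z (Set.range W)) ((Set.finite_range W).insert Z)⟫) :
    ∀ (bs bl : ℝ) (cs cl : Fin k → ℝ) (dl : ℝ),
      (⟪Y - (bs • Z + ∑ i, cs i • W i), Z⟫ = 0) →
      (∀ j, ⟪Y - (bs • Z + ∑ i, cs i • W i), W j⟫ = 0) →
      (⟪Y - (bl • Z + dl • U + ∑ i, cl i • W i), Z⟫ = 0) →
      (⟪Y - (bl • Z + dl • U + ∑ i, cl i • W i), U⟫ = 0) →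
      (∀ j, ⟪Y - (bl • Z + dl • U + ∑ i, cl i • W i), W j⟫ = 0) →
      bs - bl =
        (⟪resid U (Set.range W) (Set.finite_range W),
          resid Z (Set.range W) (Set.finite_range W)⟫ /
         ⟪resid Z (Set.range W) (Set.finite_range W),
          resid Z (Set.range W) (Set.finite_range W)⟫) *
        (⟪resid Y (insert Z (Set.range W)) ((Set.finite_range W).insert Z),
          resid U (insert Z (Set.range W)) ((Set.finite_range W).insert Z)⟫ /
         ⟪resid U (insert Z (Set.range W)) ((Set.finite_range W).insert Z),
          resid U (insert Z (Set.range W)) ((Set.finite_range W).insert Z)⟫) :=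
  stmt_7_general Y Z U W hvZ hvU
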